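/- arXiv:1307.8423 — 10 statements merged into one kernel-verified Lean document; each statement's English description precedes it below -/
import Mathlib

section
/- The Lagrangian of the Fano plane equals 1/27. -/
def lagSet {n : ℕ} (G : Finset (Finset (Fin n))) : Set ℝ :=
  {p | ∃ x : Fin n → ℝ, (∀ i, 0 ≤ x i) ∧ (∑ i, x i) = 1 ∧
    p = ∑ e ∈ G, ∏ i ∈ e, x i}

section helpers

theorem four_in_three {s : Finset (Fin 7)} (hs : s.card = 3) {x y u v : Fin 7}
    (hx : x ∈ s) (hy : y ∈ s) (hu : u ∈ s) (hv : v ∈ s)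
    (hxu : x ≠ u) (hxv : x ≠ v) (hyu : y ≠ u) (hyv : y ≠ v) (huv : u ≠ v) : x = y := by
  by_contra hxy
  have hsub : ({x,y,u,v} : Finset (Fin 7)) ⊆ s := by
    intro t ht
    simp only [Finset.mem_insert, Finset.mem_singleton] at ht
    rcases ht with rfl|rfl|rfl|rfl <;> assumption
  have hc : ({x,y,u,v} : Finset (Fin 7)).card = 4 := by
    rw [Finset.card_insert_of_notMem (by simp [hxy,hxu,hxv]),
        Finset.card_insert_of_notMem (by simp [hyu,hyv]),
        Finset.card_insert_of_notMem (by simp [huv]), Finset.card_singleton]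
  have := Finset.card_le_card hsub
  omega

end helpers

set_option maxHeartbeats 1000000 in
theorem scalar_key (A B C w : ℝ) (hC : 0 ≤ C) (hw : 0 ≤ w)
    (hAB : B ≤ A) (hBC : C ≤ B) (hsum : A+B+C+w ≤ 1) :
    A*B*C + A*(w^2/4) + B*(w^2/8) ≤ 1/27 := by
  have e0 : (0:ℝ) ≤ 1-A-B-C-w := by linarith
  have e1 : (0:ℝ) ≤ A-B := by linarith
  have e2 : (0:ℝ) ≤ B-C := by linarith
  have e3 : (0:ℝ) ≤ C := hC
  have e4 : (0:ℝ) ≤ w := hw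
  nlinarith [mul_nonneg (mul_nonneg e3 e4) e4, mul_nonneg (mul_nonneg e1 e2) e2, mul_nonneg (mul_nonneg e0 e0) e0, mul_nonneg (mul_nonneg e0 e0) e4, mul_nonneg (mul_nonneg e0 e0) e3, mul_nonneg (mul_nonneg e0 e3) e4, mul_nonneg (mul_nonneg e0 e3) e3, mul_nonneg (mul_nonneg e2 e2) e4, mul_nonneg (mul_nonneg e0 e4) e4, mul_nonneg (mul_nonneg e2 e2) e3, mul_nonneg (mul_nonneg e0 e0) e2, mul_nonneg (mul_nonneg e1 e3) e4, mul_nonneg (mul_nonneg e3 e3) e4, mul_nonneg (mul_nonneg e2 e2) e2, mul_nonneg (mul_nonneg e2 e3) e4, mul_nonneg (mul_nonneg e0 e2) e2, mul_nonneg (mul_nonneg e1 e1) e3, mul_nonneg (mul_nonneg e0 e2) e3, mul_nonneg (mul_nonneg e0 e0) e1, mul_nonneg (mul_nonneg e0 e2) e4, mul_nonneg (mul_nonneg e0 e1) e3, mul_nonneg (mul_nonneg e0 e1) e2, mul_nonneg (mul_nonneg e0 e1) e1, mul_nonneg (mul_nonneg e1 e2) e4, mul_nonneg (mul_nonneg e0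 e1) e4, mul_nonneg (mul_nonneg e1 e1) e2, mul_nonneg (mul_nonneg e1 e2) e3, mul_nonneg (sq_nonneg (3*A-1)) e1, mul_nonneg (sq_nonneg (3*A-1)) e4, mul_nonneg (sq_nonneg (3*w-2)) e4]

theorem sorted3 (X Y Z m1 m2 m3 w : ℝ) (hZ : 0 ≤ Z) (hw : 0 ≤ w)
    (hXY : Y ≤ X) (hYZ : Z ≤ Y) (hm1 : m1 ≤ w^2/4) (hm3 : 0 ≤ m3)
    (hsum3 : m1+m2+m3 ≤ 3*w^2/8) (hs : X+Y+Z+w ≤ 1) :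
    X*Y*Z + (X*m1+Y*m2+Z*m3) ≤ 1/27 := by
  have hY : 0 ≤ Y := le_trans hZ hYZ
  have l1 : (X-Y)*m1 ≤ (X-Y)*(w^2/4) := mul_le_mul_of_nonneg_left hm1 (by linarith)
  have l2 : Y*(m1+m2+m3) ≤ Y*(3*w^2/8) := mul_le_mul_of_nonneg_left hsum3 hY
  have l3 : (Z-Y)*m3 ≤ 0 := mul_nonpos_of_nonpos_of_nonneg (by linarith) hm3
  have key := scalar_key X Y Z w hZ hw hXY hYZ hs
  nlinarith [l1, l2, l3, key]

theorem perm_bound (A B C M1 M2 M3 w : ℝ) (hA : 0 ≤ A) (hB : 0 ≤ B) (hC : 0 ≤ C)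
    (hw : 0 ≤ w) (hM1 : 0 ≤ M1) (hM2 : 0 ≤ M2) (hM3 : 0 ≤ M3)
    (bM1 : M1 ≤ w^2/4) (bM2 : M2 ≤ w^2/4) (bM3 : M3 ≤ w^2/4)
    (hsum3 : M1+M2+M3 ≤ 3*w^2/8) (hs : A+B+C+w ≤ 1) :
    A*B*C + (A*M1+B*M2+C*M3) ≤ 1/27 := by
  rcases le_total A B with h1 | h1 <;> rcases le_total B C with h2 | h2 <;>
    rcases le_total A C with h3 | h3
  · nlinarith [sorted3 C B A M3 M2 M1 w hA hw h2 h1 bM3 hM1 (by linarith) (by linarith)]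
  · nlinarith [sorted3 C B A M3 M2 M1 w hA hw h2 h1 bM3 hM1 (by linarith) (by linarith)]
  · nlinarith [sorted3 B C A M2 M3 M1 w hA hw h2 h3 bM2 hM1 (by linarith) (by linarith)]
  · nlinarith [sorted3 B A C M2 M1 M3 w hC hw h1 h3 bM2 hM3 (by linarith) (by linarith)]
  · nlinarith [sorted3 C A B M3 M1 M2 w hB hw h3 h1 bM3 hM2 (by linarith) (by linarith)]
  · nlinarith [sorted3 A C B M1 M3 M2 w hB hw h3 h2 bM1 hM2 (by linarith) (by linarith)]
  · nlinarith [sorted3 A B C M1 M2 M3 w hC hw h1 h2 bM1 hM3 (by linarith) (by linarith)]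
  · nlinarith [sorted3 A B C M1 M2 M3 w hC hw h1 h2 bM1 hM3 (by linarith) (by linarith)]

theorem matching_bound (P Q R S : ℝ) (hP : 0 ≤ P) (hQ : 0 ≤ Q) (hR : 0 ≤ R) (hS : 0 ≤ S) :
    P*Q + R*S ≤ (P+Q+R+S)^2/4 := by
  nlinarith [sq_nonneg (P-Q), sq_nonneg (R-S), mul_nonneg (add_nonneg hP hQ) (add_nonneg hR hS)]

theorem e2_bound (P Q R S : ℝ) :
    (P*Q+R*S)+(P*R+Q*S)+(P*S+Q*R) ≤ 3*(P+Q+R+S)^2/8 := by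
  nlinarith [sq_nonneg (P-Q), sq_nonneg (P-R), sq_nonneg (P-S), sq_nonneg (Q-R),
    sq_nonneg (Q-S), sq_nonneg (R-S)]

set_option maxHeartbeats 3000000 in
/-- The Lagrangian of the Fano plane equals `1/27`.  A Fano plane is a
3-uniform hypergraph on 7 vertices in which every pair of distinct vertices is
contained in exactly one edge and every two distinct edges meet in exactly one
vertex. -/
theorem lagrangian_fano (F : Finset (Finset (Fin 7)))
    (h3 : ∀ e ∈ F, e.card = 3)
    (hpair : ∀ i j : Fin 7, i ≠ j → (F.filter (fun e => i ∈ e ∧ j ∈ e)).card = 1)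
    (hmeet : ∀ e ∈ F, ∀ f ∈ F, e ≠ f → (e ∩ f).card = 1) :
    IsGreatest (lagSet F) (1 / 27) := by
  classical
  have h01 : (0:Fin 7) ≠ 1 := by decide
  obtain ⟨e₀, hfil⟩ := Finset.card_eq_one.mp (hpair 0 1 h01)
  have he₀F : e₀ ∈ F := by
    have : e₀ ∈ F.filter (fun e => (0:Fin 7) ∈ e ∧ (1:Fin 7) ∈ e) := by
      rw [hfil]; exact Finset.mem_singleton_self e₀
    exact (Finset.mem_filter.mp this).1
  have he₀3 : e₀.card = 3 := h3 e₀ he₀F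
  -- uniqueness of edge through two points
  have uniq : ∀ u v : Fin 7, u ≠ v → ∀ f ∈ F, u ∈ f → v ∈ f → ∀ g ∈ F, u ∈ g → v ∈ g → f = g := by
    intro u v huv f hf hfu hfv g hg hgu hgv
    have h1 := hpair u v huv
    exact Finset.card_le_one.mp (le_of_eq h1) f
      (Finset.mem_filter.mpr ⟨hf, hfu, hfv⟩) g (Finset.mem_filter.mpr ⟨hg, hgu, hgv⟩)
  have exedge : ∀ u v : Fin 7, u ≠ v → ∃ f ∈ F, u ∈ f ∧ v ∈ f := by
    intro u v huv
    obtain ⟨f, hf⟩ := Finset.card_eq_one.mp (hpair u v huv)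
    have : f ∈ F.filter (fun e => u ∈ e ∧ v ∈ e) := by
      rw [hf]; exact Finset.mem_singleton_self f
    obtain ⟨h1, h2, h3⟩ := Finset.mem_filter.mp this
    exact ⟨f, h1, h2, h3⟩
  have third : ∀ u v : Fin 7, u ∉ e₀ → v ∉ e₀ → u ≠ v →
      ∃ z, z ∈ e₀ ∧ ({u,v,z} : Finset (Fin 7)) ∈ F := by
    intro u v hu hv huv
    obtain ⟨f, hfF, hfu, hfv⟩ := exedge u v huv
    have hfne : f ≠ e₀ := fun h => hu (h ▸ hfu)
    obtain ⟨z, hz⟩ := Finset.card_eq_one.mp (hmeet f hfF e₀ he₀F hfne)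
    have hzmem : z ∈ f ∩ e₀ := by rw [hz]; exact Finset.mem_singleton_self z
    have hzf : z ∈ f := (Finset.mem_inter.mp hzmem).1
    have hze₀ : z ∈ e₀ := (Finset.mem_inter.mp hzmem).2
    have hzu : u ≠ z := fun h => hu (h ▸ hze₀)
    have hzv : v ≠ z := fun h => hv (h ▸ hze₀)
    have hsub : ({u,v,z} : Finset (Fin 7)) ⊆ f := by
      intro t ht
      simp only [Finset.mem_insert, Finset.mem_singleton] at ht
      rcases ht with rfl|rfl|rfl <;> assumption
    have hc : ({u,v,z} : Finset (Fin 7)).card = 3 := by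
      rw [Finset.card_insert_of_notMem (by simp [huv, hzu]),
          Finset.card_insert_of_notMem (by simp [hzv]), Finset.card_singleton]
    have heq : ({u,v,z} : Finset (Fin 7)) = f :=
      Finset.eq_of_subset_of_card_le hsub (by rw [h3 f hfF, hc])
    exact ⟨z, hze₀, heq ▸ hfF⟩

  -- outside points
  have hOcard : (Finset.univ \ e₀).card = 4 := by
    rw [Finset.card_sdiff_of_subset (Finset.subset_univ _), he₀3]; rfl
  obtain ⟨p, O', hpO', hins, hO'3⟩ := Finset.card_eq_succ.mp hOcard
  obtain ⟨q, r, s, hqr, hqs, hrs, hO'⟩ := Finset.card_eq_three.mp hO'3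
  have hOmem : ∀ i : Fin 7, i ∈ (Finset.univ \ e₀) ↔ i ∉ e₀ := by
    intro i; simp [Finset.mem_sdiff]
  have hpe : p ∉ e₀ := by
    rw [← hOmem]; rw [← hins]; exact Finset.mem_insert_self p O'
  have hqe : q ∉ e₀ := by
    rw [← hOmem, ← hins]; exact Finset.mem_insert_of_mem (by rw [hO']; simp)
  have hre : r ∉ e₀ := by
    rw [← hOmem, ← hins]; exact Finset.mem_insert_of_mem (by rw [hO']; simp)
  have hse : s ∉ e₀ := by
    rw [← hOmem, ← hins]; exact Finset.mem_insert_of_mem (by rw [hO']; simp)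
  have hpq : p ≠ q := fun h => hpO' (by rw [hO']; simp [h])
  have hpr : p ≠ r := fun h => hpO' (by rw [hO']; simp [h])
  have hps : p ≠ s := fun h => hpO' (by rw [hO']; simp [h])
  have hne_out : ∀ u z : Fin 7, u ∉ e₀ → z ∈ e₀ → u ≠ z := fun u z hu hz h => hu (h ▸ hz)
  -- third points of the six outside pairs
  obtain ⟨zpq, hzpq, hepq⟩ := third p q hpe hqe hpq
  obtain ⟨zpr, hzpr, hepr⟩ := third p r hpe hre hpr
  obtain ⟨zps, hzps, heps⟩ := third p s hpe hse hps
  obtain ⟨zqr, hzqr, heqr⟩ := third q r hqe hre hqr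
  obtain ⟨zqs, hzqs, heqs⟩ := third q s hqe hse hqs
  obtain ⟨zrs, hzrs, hers⟩ := third r s hre hse hrs
  -- two edges sharing a common outside point have distinct third points
  have zdiff : ∀ (f g : Finset (Fin 7)), f ∈ F → g ∈ F → ∀ u z z' : Fin 7,
      u ∈ f → u ∈ g → z ∈ f → z' ∈ g → z ∈ e₀ → z' ∈ e₀ → u ∉ e₀ →
      (∃ d, d ∈ f ∧ d ∉ g) → z ≠ z' := by
    rintro f g hf hg u z z' huf hug hzf hz'g hz hz' hu ⟨d, hdf, hdg⟩ heq
    subst heq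
    have huz : u ≠ z := hne_out u z hu hz
    have : f = g := uniq u z huz f hf huf hzf g hg hug hz'g
    exact hdg (this ▸ hdf)
  have dpq_pr : zpq ≠ zpr := by
    refine zdiff _ _ hepq hepr p zpq zpr (by simp) (by simp) (by simp) (by simp)
      hzpq hzpr hpe ⟨q, by simp, ?_⟩
    simp only [Finset.mem_insert, Finset.mem_singleton]
    push_neg
    exact ⟨hpq.symm ∘ Eq.symm ∘ Eq.symm, hqr, hne_out q zpr hqe hzpr⟩
  have d1 : zpq ≠ zpr := zdiff _ _ hepq hepr p zpq zpr (by simp) (by simp) (by simp)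
    (by simp) hzpq hzpr hpe ⟨q, by simp, by simp [Ne.symm hpq, hqr, hne_out q zpr hqe hzpr]⟩
  have d2 : zpq ≠ zps := zdiff _ _ hepq heps p zpq zps (by simp) (by simp) (by simp)
    (by simp) hzpq hzps hpe ⟨q, by simp, by simp [Ne.symm hpq, hqs, hne_out q zps hqe hzps]⟩
  have d3 : zpr ≠ zps := zdiff _ _ hepr heps p zpr zps (by simp) (by simp) (by simp)
    (by simp) hzpr hzps hpe ⟨r, by simp, by simp [Ne.symm hpr, hrs, hne_out r zps hre hzps]⟩
  have d4 : zrs ≠ zpr := zdiff _ _ hers hepr r zrs zpr (by simp) (by simp) (by simp)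
    (by simp) hzrs hzpr hre ⟨s, by simp, by simp [Ne.symm hps, Ne.symm hrs, hne_out s zpr hse hzpr]⟩
  have d5 : zrs ≠ zps := zdiff _ _ hers heps s zrs zps (by simp) (by simp) (by simp)
    (by simp) hzrs hzps hse ⟨r, by simp, by simp [Ne.symm hpr, hrs, hne_out r zps hre hzps]⟩
  have d6 : zqs ≠ zpq := zdiff _ _ heqs hepq q zqs zpq (by simp) (by simp) (by simp)
    (by simp) hzqs hzpq hqe ⟨s, by simp, by simp [Ne.symm hps, Ne.symm hqs, hne_out s zpq hse hzpq]⟩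
  have d7 : zqs ≠ zps := zdiff _ _ heqs heps s zqs zps (by simp) (by simp) (by simp)
    (by simp) hzqs hzps hse ⟨q, by simp, by simp [Ne.symm hpq, hqs, hne_out q zps hqe hzps]⟩
  have d8 : zqr ≠ zpq := zdiff _ _ heqr hepq q zqr zpq (by simp) (by simp) (by simp)
    (by simp) hzqr hzpq hqe ⟨r, by simp, by simp [Ne.symm hpr, Ne.symm hqr, hne_out r zpq hre hzpq]⟩
  have d9 : zqr ≠ zpr := zdiff _ _ heqr hepr r zqr zpr (by simp) (by simp) (by simp)
    (by simp) hzqr hzpr hre ⟨q, by simp, by simp [Ne.symm hpq, hqr, hne_out q zpr hqe hzpr]⟩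
  have hα : zpq = zrs := four_in_three he₀3 hzpq hzrs hzpr hzps d1 d2 d4 d5
    d3
  have hβ : zpr = zqs := four_in_three he₀3 hzpr hzqs hzpq hzps d1.symm d3 d6 d7 d2
  have hγ : zps = zqr := four_in_three he₀3 hzps hzqr hzpq hzpr d2.symm d3.symm d8 d9 d1
  have hers' : ({r,s,zpq} : Finset (Fin 7)) ∈ F := by rw [hα]; exact hers
  have heqs' : ({q,s,zpr} : Finset (Fin 7)) ∈ F := by rw [hβ]; exact heqs
  have heqr' : ({q,r,zps} : Finset (Fin 7)) ∈ F := by rw [hγ]; exact heqr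
  have hFeq : F = {e₀, {p,q,zpq}, {r,s,zpq}, {p,r,zpr}, {q,s,zpr}, {p,s,zps}, {q,r,zps}} := by
    apply Finset.Subset.antisymm
    · intro f hf
      by_cases hfe : f = e₀
      · simp [hfe]
      · have hint := hmeet f hf e₀ he₀F hfe
        have hcard : (f \ e₀).card = 2 := by
          have h1 := Finset.card_inter_add_card_sdiff f e₀
          rw [h3 f hf, hint] at h1
          omega
        obtain ⟨u, v, huv, huvmem⟩ := Finset.card_eq_two.mp hcard
        have humem : u ∈ f \ e₀ := by rw [huvmem]; simp
        have hvmem : v ∈ f \ e₀ := by rw [huvmem]; simp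
        have huf : u ∈ f := (Finset.mem_sdiff.mp humem).1
        have hue : u ∉ e₀ := (Finset.mem_sdiff.mp humem).2
        have hvf : v ∈ f := (Finset.mem_sdiff.mp hvmem).1
        have hve : v ∉ e₀ := (Finset.mem_sdiff.mp hvmem).2
        have hu4 : u = p ∨ u = q ∨ u = r ∨ u = s := by
          have h4 : u ∈ Finset.univ \ e₀ := (hOmem u).mpr hue
          rw [← hins, hO'] at h4
          simpa using h4
        have hv4 : v = p ∨ v = q ∨ v = r ∨ v = s := by
          have h4 : v ∈ Finset.univ \ e₀ := (hOmem v).mpr hve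
          rw [← hins, hO'] at h4
          simpa using h4
        simp only [Finset.mem_insert, Finset.mem_singleton]
        rcases hu4 with rfl|rfl|rfl|rfl <;> rcases hv4 with rfl|rfl|rfl|rfl
        · exact absurd rfl huv
        · exact Or.inr (Or.inl (uniq u v huv _ hepq (by simp) (by simp) f hf huf hvf).symm)
        · exact Or.inr (Or.inr (Or.inr (Or.inl (uniq u v huv _ hepr (by simp) (by simp) f hf huf hvf).symm)))
        · exact Or.inr (Or.inr (Or.inr (Or.inr (Or.inr (Or.inl (uniq u v huv _ heps (by simp) (by simp) f hf huf hvf).symm)))))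
        · exact Or.inr (Or.inl (uniq v u huv.symm _ hepq (by simp) (by simp) f hf hvf huf).symm)
        · exact absurd rfl huv
        · exact Or.inr (Or.inr (Or.inr (Or.inr (Or.inr (Or.inr ((uniq u v huv _ heqr' (by simp) (by simp) f hf huf hvf).symm))))))
        · exact Or.inr (Or.inr (Or.inr (Or.inr (Or.inl (uniq u v huv _ heqs' (by simp) (by simp) f hf huf hvf).symm))))
        · exact Or.inr (Or.inr (Or.inr (Or.inl (uniq v u huv.symm _ hepr (by simp) (by simp) f hf hvf huf).symm)))
        · exact Or.inr (Or.inr (Or.inr (Or.inr (Or.inr (Or.inr ((uniq v u huv.symm _ heqr' (by simp) (by simp) f hf hvf huf).symm))))))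
        · exact absurd rfl huv
        · exact Or.inr (Or.inr (Or.inl (uniq u v huv _ hers' (by simp) (by simp) f hf huf hvf).symm))
        · exact Or.inr (Or.inr (Or.inr (Or.inr (Or.inr (Or.inl (uniq v u huv.symm _ heps (by simp) (by simp) f hf hvf huf).symm)))))
        · exact Or.inr (Or.inr (Or.inr (Or.inr (Or.inl (uniq v u huv.symm _ heqs' (by simp) (by simp) f hf hvf huf).symm))))
        · exact Or.inr (Or.inr (Or.inl (uniq v u huv.symm _ hers' (by simp) (by simp) f hf hvf huf).symm))
        · exact absurd rfl huv
    · intro f hf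
      simp only [Finset.mem_insert, Finset.mem_singleton] at hf
      rcases hf with rfl|rfl|rfl|rfl|rfl|rfl|rfl
      exacts [he₀F, hepq, hers', hepr, heqs', heps, heqr']
  have nes : ∀ {s t : Finset (Fin 7)} (d : Fin 7), d ∈ s → d ∉ t → s ≠ t :=
    fun d h1 h2 h => h2 (h ▸ h1)
  have hsube : ({zpq,zpr,zps} : Finset (Fin 7)) ⊆ e₀ := by
    intro t ht
    simp only [Finset.mem_insert, Finset.mem_singleton] at ht
    rcases ht with rfl|rfl|rfl
    exacts [hzpq, hzpr, hzps]
  have hcard3 : ({zpq,zpr,zps} : Finset (Fin 7)).card = 3 := by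
    rw [Finset.card_insert_of_notMem (by simp [d1,d2]),
        Finset.card_insert_of_notMem (by simp [d3]), Finset.card_singleton]
  have he₀eq : e₀ = {zpq,zpr,zps} :=
    (Finset.eq_of_subset_of_card_le hsube (by rw [he₀3, hcard3])).symm
  constructor
  · -- membership
    refine ⟨fun i => if i ∈ e₀ then (1/3:ℝ) else 0, fun i => by by_cases hi : i ∈ e₀ <;> simp [hi], ?_, ?_⟩
    · rw [Finset.sum_ite_mem, Finset.univ_inter, Finset.sum_const, he₀3]
      norm_num
    · have hz : ∀ e ∈ F, e ≠ e₀ → ∏ i ∈ e, (if i ∈ e₀ then (1/3:ℝ) else 0) = 0 := by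
        intro e heF hne
        have hsub : ¬ e ⊆ e₀ := fun hs =>
          hne (Finset.eq_of_subset_of_card_le hs (by rw [h3 e heF, he₀3]))
        obtain ⟨i, hie, hie₀⟩ := Finset.not_subset.mp hsub
        exact Finset.prod_eq_zero hie (if_neg hie₀)
      rw [Finset.sum_eq_single_of_mem e₀ he₀F hz,
        Finset.prod_congr rfl (fun i hi => if_pos hi), Finset.prod_const, he₀3]
      norm_num
  · -- upper bound
    rintro v ⟨x, hx0, hxs, rfl⟩
    have bM1 := matching_bound (x p) (x q) (x r) (x s) (hx0 p) (hx0 q) (hx0 r) (hx0 s)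
    have bM2 : x p * x r + x q * x s ≤ (x p + x q + x r + x s)^2/4 := by
      calc x p * x r + x q * x s ≤ (x p + x r + x q + x s)^2/4 :=
            matching_bound (x p) (x r) (x q) (x s) (hx0 p) (hx0 r) (hx0 q) (hx0 s)
        _ = (x p + x q + x r + x s)^2/4 := by ring
    have bM3 : x p * x s + x q * x r ≤ (x p + x q + x r + x s)^2/4 := by
      calc x p * x s + x q * x r ≤ (x p + x s + x q + x r)^2/4 :=
            matching_bound (x p) (x s) (x q) (x r) (hx0 p) (hx0 s) (hx0 q) (hx0 r)
        _ = (x p + x q + x r + x s)^2/4 := by ring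
    have hsum3 := e2_bound (x p) (x q) (x r) (x s)
    have hs7 : x zpq + x zpr + x zps + (x p + x q + x r + x s) ≤ 1 := by
      have hle : ∑ i ∈ ({zpq,zpr,zps,p,q,r,s} : Finset (Fin 7)), x i ≤ ∑ i, x i :=
        Finset.sum_le_sum_of_subset_of_nonneg (Finset.subset_univ _) (fun i _ _ => hx0 i)
      rw [hxs] at hle
      rw [Finset.sum_insert (by simp [d1, d2, Ne.symm (hne_out p zpq hpe hzpq),
            Ne.symm (hne_out q zpq hqe hzpq), Ne.symm (hne_out r zpq hre hzpq),
            Ne.symm (hne_out s zpq hse hzpq)]),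
          Finset.sum_insert (by simp [d3, Ne.symm (hne_out p zpr hpe hzpr),
            Ne.symm (hne_out q zpr hqe hzpr), Ne.symm (hne_out r zpr hre hzpr),
            Ne.symm (hne_out s zpr hse hzpr)]),
          Finset.sum_insert (by simp [Ne.symm (hne_out p zps hpe hzps),
            Ne.symm (hne_out q zps hqe hzps), Ne.symm (hne_out r zps hre hzps),
            Ne.symm (hne_out s zps hse hzps)]),
          Finset.sum_insert (by simp [hpq, hpr, hps]),
          Finset.sum_insert (by simp [hqr, hqs]),
          Finset.sum_insert (by simp [hrs]), Finset.sum_singleton] at hle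
      linarith
    have key := perm_bound (x zpq) (x zpr) (x zps)
      (x p * x q + x r * x s) (x p * x r + x q * x s) (x p * x s + x q * x r)
      (x p + x q + x r + x s) (hx0 zpq) (hx0 zpr) (hx0 zps)
      (add_nonneg (add_nonneg (add_nonneg (hx0 p) (hx0 q)) (hx0 r)) (hx0 s))
      (add_nonneg (mul_nonneg (hx0 p) (hx0 q)) (mul_nonneg (hx0 r) (hx0 s)))
      (add_nonneg (mul_nonneg (hx0 p) (hx0 r)) (mul_nonneg (hx0 q) (hx0 s)))
      (add_nonneg (mul_nonneg (hx0 p) (hx0 s)) (mul_nonneg (hx0 q) (hx0 r)))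
      bM1 bM2 bM3 hsum3 hs7
    rw [hFeq, he₀eq]
    rw [Finset.sum_insert ?n1, Finset.sum_insert ?n2, Finset.sum_insert ?n3,
        Finset.sum_insert ?n4, Finset.sum_insert ?n5, Finset.sum_insert ?n6,
        Finset.sum_singleton]
    case n1 =>
      simp only [Finset.mem_insert, Finset.mem_singleton]
      push_neg
      exact ⟨nes zpr (by simp) (by simp [Ne.symm (hne_out p zpr hpe hzpr),
              Ne.symm (hne_out q zpr hqe hzpr), d1.symm]),
             nes zpr (by simp) (by simp [Ne.symm (hne_out r zpr hre hzpr),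
              Ne.symm (hne_out s zpr hse hzpr), d1.symm]),
             nes zpq (by simp) (by simp [Ne.symm (hne_out p zpq hpe hzpq),
              Ne.symm (hne_out r zpq hre hzpq), d1]),
             nes zpq (by simp) (by simp [Ne.symm (hne_out q zpq hqe hzpq),
              Ne.symm (hne_out s zpq hse hzpq), d1]),
             nes zpq (by simp) (by simp [Ne.symm (hne_out p zpq hpe hzpq),
              Ne.symm (hne_out s zpq hse hzpq), d2]),
             nes zpq (by simp) (by simp [Ne.symm (hne_out q zpq hqe hzpq),
              Ne.symm (hne_out r zpq hre hzpq), d2])⟩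
    case n2 =>
      simp only [Finset.mem_insert, Finset.mem_singleton]
      push_neg
      exact ⟨nes p (by simp) (by simp [hpr, hps, hne_out p zpq hpe hzpq]),
             nes q (by simp) (by simp [Ne.symm hpq, hqr, hne_out q zpr hqe hzpr]),
             nes p (by simp) (by simp [hpq, hps, hne_out p zpr hpe hzpr]),
             nes q (by simp) (by simp [Ne.symm hpq, hqs, hne_out q zps hqe hzps]),
             nes p (by simp) (by simp [hpq, hpr, hne_out p zps hpe hzps])⟩
    case n3 =>
      simp only [Finset.mem_insert, Finset.mem_singleton]
      push_neg
      exact ⟨nes s (by simp) (by simp [Ne.symm hps, Ne.symm hrs, hne_out s zpr hse hzpr]),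
             nes r (by simp) (by simp [Ne.symm hqr, hrs, hne_out r zpr hre hzpr]),
             nes r (by simp) (by simp [Ne.symm hpr, hrs, hne_out r zps hre hzps]),
             nes s (by simp) (by simp [Ne.symm hqs, Ne.symm hrs, hne_out s zps hse hzps])⟩
    case n4 =>
      simp only [Finset.mem_insert, Finset.mem_singleton]
      push_neg
      exact ⟨nes p (by simp) (by simp [hpq, hps, hne_out p zpr hpe hzpr]),
             nes r (by simp) (by simp [Ne.symm hpr, hrs, hne_out r zps hre hzps]),
             nes p (by simp) (by simp [hpq, hpr, hne_out p zps hpe hzps])⟩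
    case n5 =>
      simp only [Finset.mem_insert, Finset.mem_singleton]
      push_neg
      exact ⟨nes q (by simp) (by simp [Ne.symm hpq, hqs, hne_out q zps hqe hzps]),
             nes s (by simp) (by simp [Ne.symm hqs, Ne.symm hrs, hne_out s zps hse hzps])⟩
    case n6 =>
      rw [Finset.mem_singleton]
      exact nes p (by simp) (by simp [hpq, hpr, hne_out p zps hpe hzps])
    rw [Finset.prod_insert (by simp [d1, d2]), Finset.prod_insert (by simp [d3]),
        Finset.prod_singleton,
        Finset.prod_insert (by simp [hpq, hne_out p zpq hpe hzpq]),
        Finset.prod_insert (by simp [hne_out q zpq hqe hzpq]), Finset.prod_singleton,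
        Finset.prod_insert (by simp [hrs, hne_out r zpq hre hzpq]),
        Finset.prod_insert (by simp [hne_out s zpq hse hzpq]), Finset.prod_singleton,
        Finset.prod_insert (by simp [hpr, hne_out p zpr hpe hzpr]),
        Finset.prod_insert (by simp [hne_out r zpr hre hzpr]), Finset.prod_singleton,
        Finset.prod_insert (by simp [hqs, hne_out q zpr hqe hzpr]),
        Finset.prod_insert (by simp [hne_out s zpr hse hzpr]), Finset.prod_singleton,
        Finset.prod_insert (by simp [hps, hne_out p zps hpe hzps]),
        Finset.prod_insert (by simp [hne_out s zps hse hzps]), Finset.prod_singleton,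
        Finset.prod_insert (by simp [hqr, hne_out q zps hqe hzps]),
        Finset.prod_insert (by simp [hne_out r zps hre hzps]), Finset.prod_singleton]
    nlinarith [key]
end

section
/- For every integer n ≥ 3, the Lagrangian of the star 3-graph, whose edges are all triples {1,i,j} with 2 ≤ i < j ≤ n, is strictly less than 2/27. More precisely it equals ((n-2)/(n-1))·(2/27). -/
lemma pair_sum {α : Type*} [DecidableEq α] (t : Finset α) (x : α → ℝ) :
    ∑ f ∈ t.powersetCard 2, ∏ i ∈ f, x i
      = ((∑ i ∈ t, x i)^2 - ∑ i ∈ t, (x i)^2) / 2 := by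
  induction t using Finset.induction_on with
  | empty =>
    rw [Finset.powersetCard_eq_empty.2 (by simp)]
    simp
  | @insert a s ha ih =>
    have h2 : (2 : ℕ) = Nat.succ 1 := rfl
    rw [h2, Finset.powersetCard_succ_insert ha]
    have hdisj : Disjoint (s.powersetCard (Nat.succ 1))
        ((s.powersetCard 1).image (insert a)) := by
      simp only [Finset.disjoint_left, Finset.mem_image, Finset.mem_powersetCard]
      rintro f ⟨hfs, _⟩ ⟨g, hg, rfl⟩
      exact ha (hfs (Finset.mem_insert_self a g))
    have hinj : ∀ f ∈ s.powersetCard 1, ∀ g ∈ s.powersetCard 1,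
        insert a f = insert a g → f = g := by
      intro f hf g hg h
      rw [Finset.mem_powersetCard] at hf hg
      have haf : a ∉ f := fun h' => ha (hf.1 h')
      have hag : a ∉ g := fun h' => ha (hg.1 h')
      rw [← Finset.erase_insert haf, ← Finset.erase_insert hag, h]
    rw [Finset.sum_union hdisj, Finset.sum_image hinj, ← h2, ih]
    have hstep : ∑ f ∈ s.powersetCard 1, ∏ i ∈ insert a f, x i
        = x a * ∑ i ∈ s, x i := by
      rw [Finset.powersetCard_one, Finset.sum_map, Finset.mul_sum]
      refine Finset.sum_congr rfl fun i hi => ?_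
      simp only [Function.Embedding.coeFn_mk]
      rw [Finset.prod_insert (by
        simp only [Finset.mem_singleton]
        rintro rfl; exact ha hi), Finset.prod_singleton]
    rw [hstep, Finset.sum_insert ha, Finset.sum_insert ha]
    ring

/-- For `n ≥ 3`, the Lagrangian of the star 3-graph (all triples containing a
fixed vertex) equals `((n-2)/(n-1))·(2/27)`, which is strictly less than `2/27`. -/
theorem lagrangian_star (n : ℕ) (hn : 3 ≤ n) :
    IsGreatest
      (lagSet ((Finset.univ.powersetCard 3).filter
        (fun e => (⟨0, by omega⟩ : Fin n) ∈ e)))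
      (((n : ℝ) - 2) / ((n : ℝ) - 1) * (2 / 27)) ∧
    ((n : ℝ) - 2) / ((n : ℝ) - 1) * (2 / 27) < 2 / 27 := by
  have hN : (3:ℝ) ≤ (n:ℝ) := by exact_mod_cast hn
  have hN1 : (0:ℝ) < (n:ℝ) - 1 := by linarith
  set z : Fin n := ⟨0, by omega⟩ with hz
  set t : Finset (Fin n) := Finset.univ.erase z with ht
  have hzt : z ∉ t := Finset.notMem_erase _ _
  have hcard : t.card = n - 1 := by
    rw [ht, Finset.card_erase_of_mem (Finset.mem_univ z), Finset.card_univ, Fintype.card_fin]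
  have hcardR : (t.card : ℝ) = (n:ℝ) - 1 := by
    rw [hcard, Nat.cast_sub (by omega : 1 ≤ n), Nat.cast_one]
  -- rewrite the sum over edges for an arbitrary x
  have hsum : ∀ x : Fin n → ℝ,
      ∑ e ∈ (Finset.univ.powersetCard 3).filter (fun e => z ∈ e), ∏ i ∈ e, x i
        = x z * ((∑ i ∈ t, x i)^2 - ∑ i ∈ t, (x i)^2) / 2 := by
    intro x
    have hb : ∑ e ∈ (Finset.univ.powersetCard 3).filter (fun e => z ∈ e), ∏ i ∈ e, x i
        = ∑ f ∈ t.powersetCard 2, x z * ∏ i ∈ f, x i := by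
      refine Finset.sum_nbij' (i := fun e => e.erase z) (j := fun f => insert z f)
        ?_ ?_ ?_ ?_ ?_
      · intro e he
        simp only [Finset.mem_filter, Finset.mem_powersetCard] at he
        obtain ⟨⟨_, hc⟩, hze⟩ := he
        rw [Finset.mem_powersetCard]
        constructor
        · intro i hi
          rw [Finset.mem_erase] at hi
          rw [ht, Finset.mem_erase]
          exact ⟨hi.1, Finset.mem_univ i⟩
        · rw [Finset.card_erase_of_mem hze, hc]
      · intro f hf
        rw [Finset.mem_powersetCard] at hf
        have hzf : z ∉ f := fun h => hzt (hf.1 h)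
        simp only [Finset.mem_filter, Finset.mem_powersetCard]
        refine ⟨⟨fun i _ => Finset.mem_univ i, ?_⟩, Finset.mem_insert_self z f⟩
        rw [Finset.card_insert_of_notMem hzf, hf.2]
      · intro e he
        simp only [Finset.mem_filter] at he
        exact Finset.insert_erase he.2
      · intro f hf
        rw [Finset.mem_powersetCard] at hf
        exact Finset.erase_insert (fun h => hzt (hf.1 h))
      · intro e he
        simp only [Finset.mem_filter] at he
        exact (Finset.mul_prod_erase e x he.2).symm
    rw [hb, ← Finset.mul_sum, pair_sum, mul_div_assoc]
  constructor
  · constructor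
    · -- membership: the optimal point
      set c : ℝ := 2 / (3 * ((n:ℝ) - 1)) with hc
      have hc0 : 0 ≤ c := by positivity
      refine ⟨fun i => if i = z then 1/3 else c, fun i => ?_, ?_, ?_⟩
      · dsimp only; split <;> norm_num [hc0]
      · rw [← Finset.add_sum_erase _ _ (Finset.mem_univ z), ← ht]
        simp only [if_pos rfl, ↓reduceIte]
        rw [Finset.sum_congr rfl (fun i hi => if_neg (Finset.ne_of_mem_erase hi)),
          Finset.sum_const, nsmul_eq_mul, hcardR, hc]
        field_simp
        ring
      · rw [hsum]
        simp only [if_pos rfl, ↓reduceIte]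
        have hsc : ∑ i ∈ t, (if i = z then (1:ℝ)/3 else c) = ((n:ℝ) - 1) * c := by
          rw [Finset.sum_congr rfl (fun i hi => if_neg (Finset.ne_of_mem_erase hi)),
            Finset.sum_const, nsmul_eq_mul, hcardR]
        have hsq : ∑ i ∈ t, (if i = z then (1:ℝ)/3 else c)^2 = ((n:ℝ) - 1) * c^2 := by
          rw [Finset.sum_congr rfl (fun i hi => by
            rw [if_neg (Finset.ne_of_mem_erase hi)]), Finset.sum_const, nsmul_eq_mul, hcardR]
        rw [hsc, hsq, hc]
        field_simp
        ring
    · -- upper bound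
      rintro p ⟨x, hx0, hx1, rfl⟩
      rw [hsum x]
      set a := x z with hadef
      set S := ∑ i ∈ t, x i with hSdef
      set Q := ∑ i ∈ t, (x i)^2 with hQdef
      have hS : a + S = 1 := by
        rw [hadef, hSdef, ht, Finset.add_sum_erase _ _ (Finset.mem_univ z), hx1]
      have hQ : S^2 ≤ ((n:ℝ) - 1) * Q := by
        have h := sq_sum_le_card_mul_sum_sq (s := t) (f := x)
        rwa [hcardR] at h
      have ha0 : 0 ≤ a := hx0 z
      have hS0 : 0 ≤ S := Finset.sum_nonneg fun i _ => hx0 i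
      have hQ0 : 0 ≤ Q := Finset.sum_nonneg fun i _ => sq_nonneg _
      have ha1 : a ≤ 1 := by linarith
      have hS' : S = 1 - a := by linarith
      have hcube : a * S^2 ≤ 4/27 := by
        rw [hS']
        nlinarith [mul_nonneg (sq_nonneg (3*a - 1)) (by linarith : (0:ℝ) ≤ 4 - 3*a)]
      have h2 : a * S^2 ≤ a * (((n:ℝ) - 1) * Q) := mul_le_mul_of_nonneg_left hQ ha0
      have h3 : a * S^2 * ((n:ℝ) - 2) ≤ (4/27) * ((n:ℝ) - 2) :=
        mul_le_mul_of_nonneg_right hcube (by linarith)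
      rw [div_mul_eq_mul_div, le_div_iff₀ hN1]
      nlinarith [h2, h3]
  · -- strict inequality
    have h1 : ((n:ℝ) - 2) / ((n:ℝ) - 1) < 1 := by
      rw [div_lt_one hN1]; linarith
    nlinarith [h1]
end

section
/- The Lagrangian of K_5^{3-}, the 3-graph on 5 vertices obtained from the complete 3-graph K_5^3 by removing one edge, equals (13√13 − 35)/162, which is strictly less than 2/25 − 10^{-3}. -/
lemma lag_perm {n : ℕ} (G : Finset (Finset (Fin n))) (σ : Equiv.Perm (Fin n)) :
    lagSet (G.image (Finset.image σ)) = lagSet G := by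
  have key : ∀ (H : Finset (Finset (Fin n))) (τ : Equiv.Perm (Fin n)),
      lagSet H ⊆ lagSet (H.image (Finset.image τ)) := by
    intro H τ p hp
    obtain ⟨x, hx, hs, rfl⟩ := hp
    refine ⟨x ∘ τ.symm, fun i => hx _, ?_, ?_⟩
    · rw [show ∑ i, (x ∘ τ.symm) i = ∑ i, x (τ.symm i) from rfl, Equiv.sum_comp τ.symm x]
      exact hs
    · rw [Finset.sum_image (by
        intro a _ b _ hab
        exact (Finset.image_injective τ.injective) hab)]
      refine Finset.sum_congr rfl fun e _ => ?_
      rw [Finset.prod_image (by intro a _ b _ h; exact τ.injective h)]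
      simp
  apply Set.Subset.antisymm
  · intro p hp
    have := key (G.image (Finset.image σ)) σ⁻¹ hp
    have h2 : (Finset.image (⇑σ⁻¹) ∘ Finset.image ⇑σ) = (id : Finset (Fin n) → Finset (Fin n)) := by
      funext s
      simp [Finset.image_image]
    rw [Finset.image_image, h2, Finset.image_id] at this
    exact this
  · exact key G σ

lemma sqrt13_sq : (Real.sqrt 13) ^ 2 = 13 := Real.sq_sqrt (by norm_num)

lemma sqrt13_lb : (3 : ℝ) ≤ Real.sqrt 13 := by
  nlinarith [sqrt13_sq, Real.sqrt_nonneg 13]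

lemma sqrt13_ub : Real.sqrt 13 ≤ 37/10 := by
  nlinarith [sqrt13_sq, Real.sqrt_nonneg 13]

lemma ub_core (a b u v w : ℝ) (ha : 0 ≤ a) (hb : 0 ≤ b) (hu : 0 ≤ u) (hv : 0 ≤ v)
    (hw : 0 ≤ w) (hsum : a + b + u + v + w = 1) :
    a*b*u + a*b*v + a*b*w + a*u*v + a*u*w + a*v*w + b*u*v + b*u*w + b*v*w
      ≤ (13 * Real.sqrt 13 - 35) / 162 := by
  set q := Real.sqrt 13 with hqdef
  have hq : q ^ 2 = 13 := sqrt13_sq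
  have hq3 : (3:ℝ) ≤ q := sqrt13_lb
  have hq4 : q ≤ 37/10 := sqrt13_ub
  set s := a + b with hs
  have hs0 : 0 ≤ s := by positivity
  have hs1 : s ≤ 1 := by linarith
  have ht : u + v + w = 1 - s := by linarith
  have h1 : a*b ≤ s^2/4 := by nlinarith [sq_nonneg (a-b)]
  have h2 : u*v + u*w + v*w ≤ (1-s)^2/3 := by
    nlinarith [sq_nonneg (u-v), sq_nonneg (u-w), sq_nonneg (v-w)]
  have e1 : a*b*(u+v+w) ≤ s^2/4*(1-s) := by
    rw [ht]
    exact mul_le_mul_of_nonneg_right h1 (by linarith)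
  have e2 : s*(u*v+u*w+v*w) ≤ s*((1-s)^2/3) := mul_le_mul_of_nonneg_left h2 hs0
  have hT : 0 ≤ (s-(5-q)/3)^2*((5+2*q)/3-s) := by
    apply mul_nonneg (sq_nonneg _)
    nlinarith
  have hid : (13*q-35)/162*12 - (4*s-5*s^2+s^3)
      = (s-(5-q)/3)^2*((5+2*q)/3-s) := by
    linear_combination (5/9 - s/3 - 2*q/27) * hq
  nlinarith [e1, e2, hT, hid]

lemma base : IsGreatest
    (lagSet ((Finset.univ.powersetCard 3).erase ({2,3,4} : Finset (Fin 5))))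
    ((13 * Real.sqrt 13 - 35) / 162) := by
  have hq : (Real.sqrt 13) ^ 2 = 13 := sqrt13_sq
  have hq3 : (3:ℝ) ≤ Real.sqrt 13 := sqrt13_lb
  have hq4 : Real.sqrt 13 ≤ 37/10 := sqrt13_ub
  have hE : ((Finset.univ.powersetCard 3).erase ({2,3,4} : Finset (Fin 5)))
      = {{0,1,2},{0,1,3},{0,1,4},{0,2,3},{0,2,4},{0,3,4},{1,2,3},{1,2,4},{1,3,4}} := by
    decide
  constructor
  · refine ⟨![(5-Real.sqrt 13)/6, (5-Real.sqrt 13)/6,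
      (Real.sqrt 13-2)/9, (Real.sqrt 13-2)/9, (Real.sqrt 13-2)/9], ?_, ?_, ?_⟩
    · intro i
      fin_cases i <;> simp <;> linarith
    · rw [Fin.sum_univ_five]
      simp only [Matrix.cons_val_zero, Matrix.cons_val_one, Matrix.head_cons,
        Matrix.cons_val_two, Matrix.tail_cons, Matrix.cons_val_three, Matrix.cons_val_four]
      ring
    · rw [hE]
      simp (config := { decide := true }) only [Finset.sum_insert, Finset.prod_insert,
        Finset.sum_singleton, Finset.prod_singleton, Finset.mem_insert, Finset.mem_singleton,
        Matrix.cons_val_zero, Matrix.cons_val_one, Matrix.head_cons,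
        Matrix.cons_val_two, Matrix.tail_cons, Matrix.cons_val_three, Matrix.cons_val_four]
      linear_combination (Real.sqrt 13/324) * hq
  · rintro p ⟨x, hx, hs, rfl⟩
    rw [hE]
    rw [Fin.sum_univ_five] at hs
    have key := ub_core (x 0) (x 1) (x 2) (x 3) (x 4) (hx 0) (hx 1) (hx 2) (hx 3) (hx 4) hs
    simp (config := { decide := true }) only [Finset.sum_insert, Finset.prod_insert,
      Finset.sum_singleton, Finset.prod_singleton, Finset.mem_insert, Finset.mem_singleton]
    linarith [key]

lemma case_of (σ : Equiv.Perm (Fin 5)) {E : Finset (Finset (Fin 5))}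
    (h : E = ((Finset.univ.powersetCard 3).erase ({2,3,4} : Finset (Fin 5))).image
      (Finset.image σ)) :
    IsGreatest (lagSet E) ((13 * Real.sqrt 13 - 35) / 162) := by
  rw [h, lag_perm]
  exact base

/-- The Lagrangian of `K_5^3` minus any one edge equals `(13√13 − 35)/162`,
which is strictly less than `2/25 − 10⁻³`. -/
theorem lagrangian_K53_minus (e₀ : Finset (Fin 5)) (he₀ : e₀.card = 3) :
    IsGreatest (lagSet ((Finset.univ.powersetCard 3).erase e₀))
      ((13 * Real.sqrt 13 - 35) / 162) ∧
    (13 * Real.sqrt 13 - 35) / 162 < 2 / 25 - 1 / 1000 := by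
  constructor
  · have he : e₀ ∈ Finset.univ.powersetCard 3 :=
      Finset.mem_powersetCard.mpr ⟨Finset.subset_univ _, he₀⟩
    fin_cases he <;>
      first
      | exact case_of 1 (by decide)
      | exact case_of (Equiv.swap 1 2) (by decide)
      | exact case_of (Equiv.swap 1 3) (by decide)
      | exact case_of (Equiv.swap 1 4) (by decide)
      | exact case_of (Equiv.swap 0 2) (by decide)
      | exact case_of (Equiv.swap 0 3) (by decide)
      | exact case_of (Equiv.swap 0 4) (by decide)
      | exact case_of (Equiv.swap 0 2 * Equiv.swap 1 3) (by decide)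
      | exact case_of (Equiv.swap 0 2 * Equiv.swap 1 4) (by decide)
      | exact case_of (Equiv.swap 0 3 * Equiv.swap 1 4) (by decide)
  · nlinarith [sqrt13_sq, Real.sqrt_nonneg 13, sq_nonneg (Real.sqrt 13 - 18/5)]
end

section
/- Let F be a family of subsets of [n] and suppose the transposition (i j) (for some i ≠ j) is an automorphism of F, i.e. swapping i and j maps the family to itself. Given nonnegative weights a_1,...,a_n summing to 1, define a' by a'_i = a'_j = (a_i + a_j)/2 and a'_t = a_t otherwise. Then p_F(a') ≥ p_F(a), where p_F(x) = Σ_{A ∈ F} Π_{t ∈ A} x_t. -/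
/-- If the transposition `(i j)` is an automorphism of a family `F` of subsets
of `[n]`, then averaging the weights of `i` and `j` does not decrease `p_F`. -/
theorem symmetrize_not_decrease {n : ℕ} (F : Finset (Finset (Fin n)))
    (i j : Fin n) (hij : i ≠ j)
    (haut : F.image (fun A => A.image (Equiv.swap i j)) = F)
    (a : Fin n → ℝ) (ha : ∀ t, 0 ≤ a t) (hsum : ∑ t, a t = 1) :
    ∑ A ∈ F, ∏ t ∈ A, a t ≤
      ∑ A ∈ F, ∏ t ∈ A,
        (fun t => if t = i ∨ t = j then (a i + a j) / 2 else a t) t := by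
  set σ := Equiv.swap i j with hσ
  set a' : Fin n → ℝ := fun t => if t = i ∨ t = j then (a i + a j) / 2 else a t with ha'
  show ∑ A ∈ F, ∏ t ∈ A, a t ≤ ∑ A ∈ F, ∏ t ∈ A, a' t
  -- the second copy of the sum, transported by the swap
  have hswap : ∑ A ∈ F, ∏ t ∈ A, a t = ∑ A ∈ F, ∏ t ∈ A, a (σ t) := by
    conv_lhs => rw [← haut]
    rw [Finset.sum_image (fun A _ B _ h =>
      Finset.image_injective (Equiv.injective σ) h)]
    refine Finset.sum_congr rfl fun A _ => ?_
    rw [Finset.prod_image (fun x _ y _ h => Equiv.injective σ h)]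
  -- key pointwise inequality
  have key : ∀ A : Finset (Fin n),
      (∏ t ∈ A, a t) + (∏ t ∈ A, a (σ t)) ≤ 2 * ∏ t ∈ A, a' t := by
    intro A
    set S := (A.erase i).erase j with hS
    have hiS : i ∉ S := fun h => (Finset.mem_erase.mp (Finset.mem_erase.mp h).2).1 rfl
    have hjS : j ∉ S := fun h => (Finset.mem_erase.mp h).1 rfl
    have hr : (0:ℝ) ≤ ∏ t ∈ S, a t := Finset.prod_nonneg fun t _ => ha t
    have hfix : ∀ t ∈ S, a (σ t) = a t := by
      intro t ht
      have h1 : t ≠ i := fun h => hiS (h ▸ ht)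
      have h2 : t ≠ j := fun h => hjS (h ▸ ht)
      rw [hσ, Equiv.swap_apply_of_ne_of_ne h1 h2]
    have hfix' : ∀ t ∈ S, a' t = a t := by
      intro t ht
      have h1 : t ≠ i := fun h => hiS (h ▸ ht)
      have h2 : t ≠ j := fun h => hjS (h ▸ ht)
      simp [ha', h1, h2]
    by_cases hi : i ∈ A <;> by_cases hj : j ∈ A
    · -- both
      have hjA : j ∈ A.erase i := Finset.mem_erase.mpr ⟨hij.symm, hj⟩
      have split : ∀ h : Fin n → ℝ,
          ∏ t ∈ A, h t = h i * (h j * ∏ t ∈ S, h t) := by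
        intro h
        rw [← Finset.mul_prod_erase _ _ hi, ← Finset.mul_prod_erase _ _ hjA]
      rw [split a, split (fun t => a (σ t)), split a',
        Finset.prod_congr rfl hfix, Finset.prod_congr rfl hfix']
      simp only [hσ, Equiv.swap_apply_left, Equiv.swap_apply_right]
      have h1 : a' i = (a i + a j) / 2 := by simp [ha']
      have h2 : a' j = (a i + a j) / 2 := by simp [ha']
      rw [h1, h2]
      nlinarith [sq_nonneg (a i - a j), ha i, ha j]
    · -- i only
      have hSA : S = A.erase i := by
        rw [hS, Finset.erase_eq_of_notMem (fun h => hj (Finset.mem_of_mem_erase h))]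
      have split : ∀ h : Fin n → ℝ,
          ∏ t ∈ A, h t = h i * ∏ t ∈ S, h t := by
        intro h
        rw [hSA, ← Finset.mul_prod_erase _ _ hi]
      rw [split a, split (fun t => a (σ t)), split a',
        Finset.prod_congr rfl hfix, Finset.prod_congr rfl hfix']
      simp only [hσ, Equiv.swap_apply_left]
      have h1 : a' i = (a i + a j) / 2 := by simp [ha']
      rw [h1]; ring_nf; linarith
    · -- j only
      have hSA : S = A.erase j := by
        rw [hS, Finset.erase_eq_of_notMem (fun h => hi h)]
      have split : ∀ h : Fin n → ℝ,
          ∏ t ∈ A, h t = h j * ∏ t ∈ S, h t := by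
        intro h
        rw [hSA, ← Finset.mul_prod_erase _ _ hj]
      rw [split a, split (fun t => a (σ t)), split a',
        Finset.prod_congr rfl hfix, Finset.prod_congr rfl hfix']
      simp only [hσ, Equiv.swap_apply_right]
      have h2 : a' j = (a i + a j) / 2 := by simp [ha']
      rw [h2]; ring_nf; linarith
    · -- neither
      have hSA : S = A := by
        rw [hS, Finset.erase_eq_of_notMem (fun h => hi h),
          Finset.erase_eq_of_notMem (fun h => hj h)]
      rw [hSA] at hfix hfix'
      rw [Finset.prod_congr rfl hfix, Finset.prod_congr rfl hfix']
      ring_nf; linarith [le_refl (∏ t ∈ A, a t)]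
  have hsumkey : ∑ A ∈ F, ((∏ t ∈ A, a t) + (∏ t ∈ A, a (σ t)))
      ≤ ∑ A ∈ F, 2 * ∏ t ∈ A, a' t :=
    Finset.sum_le_sum fun A _ => key A
  rw [Finset.sum_add_distrib, ← hswap, ← Finset.mul_sum] at hsumkey
  linarith
end

section
/- Let F be a family of subsets of [n] and suppose i dominates j for F, meaning that { A \ {j} : A ∈ F, j ∈ A } ⊆ { A \ {i} : A ∈ F, i ∈ A }. Given nonnegative weights a_1,...,a_n, define a' by a'_j = 0, a'_i = a_i + a_j, and a'_t = a_t for t ≠ i,j. Then p_F(a') ≥ p_F(a), where p_F(x) = Σ_{A ∈ F} Π_{t ∈ A} x_t. -/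
/-- If `i` dominates `j` for the family `F` (the link of `j` is contained in
the link of `i`), then moving all the weight of `j` to `i` does not decrease
`p_F`. -/
theorem dominate_not_decrease {n : ℕ} (F : Finset (Finset (Fin n)))
    (i j : Fin n) (hij : i ≠ j)
    (hdom : ((F.filter (fun A => j ∈ A)).image (fun A => A.erase j)) ⊆
            ((F.filter (fun A => i ∈ A)).image (fun A => A.erase i)))
    (a : Fin n → ℝ) (ha : ∀ t, 0 ≤ a t) :
    ∑ A ∈ F, ∏ t ∈ A, a t ≤
      ∑ A ∈ F, ∏ t ∈ A,
        (fun t => if t = j then 0 else if t = i then a i + a j else a t) t := by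
  set g : Fin n → ℝ := fun t => if t = j then 0 else if t = i then a i + a j else a t with hg
  -- no set of F contains both i and j
  have hboth : ∀ A ∈ F, j ∈ A → i ∉ A := by
    intro A hA hjA hiA
    obtain ⟨B, hB, hBe⟩ := Finset.mem_image.mp
      (hdom (Finset.mem_image_of_mem _ (Finset.mem_filter.mpr ⟨hA, hjA⟩)))
    have hi : i ∈ A.erase j := Finset.mem_erase.mpr ⟨hij, hiA⟩
    rw [← hBe] at hi
    exact Finset.notMem_erase i B hi
  have e1 : (F.filter (fun A => i ∉ A)).filter (fun A => j ∈ A)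
      = F.filter (fun A => j ∈ A) := by
    rw [Finset.filter_filter]
    ext A
    simp only [Finset.mem_filter]
    constructor
    · rintro ⟨hA, _, hj⟩; exact ⟨hA, hj⟩
    · rintro ⟨hA, hj⟩; exact ⟨hA, hboth A hA hj, hj⟩
  have split : ∀ f : Finset (Fin n) → ℝ,
      ∑ A ∈ F, f A = ∑ A ∈ F.filter (fun A => i ∈ A), f A
        + ∑ A ∈ F.filter (fun A => j ∈ A), f A
        + ∑ A ∈ (F.filter (fun A => i ∉ A)).filter (fun A => j ∉ A), f A := by
    intro f
    rw [← Finset.sum_filter_add_sum_filter_not F (fun A => i ∈ A) f,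
      ← Finset.sum_filter_add_sum_filter_not (F.filter (fun A => i ∉ A)) (fun A => j ∈ A) f,
      e1, add_assoc]
  rw [split (fun A => ∏ t ∈ A, a t), split (fun A => ∏ t ∈ A, g t)]
  -- the rest is unchanged
  have hrest : ∑ A ∈ (F.filter (fun A => i ∉ A)).filter (fun A => j ∉ A), ∏ t ∈ A, g t
      = ∑ A ∈ (F.filter (fun A => i ∉ A)).filter (fun A => j ∉ A), ∏ t ∈ A, a t := by
    refine Finset.sum_congr rfl fun A hA => Finset.prod_congr rfl fun t ht => ?_
    simp only [Finset.mem_filter] at hA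
    have htj : t ≠ j := fun h => hA.2 (h ▸ ht)
    have hti : t ≠ i := fun h => hA.1.2 (h ▸ ht)
    simp [hg, htj, hti]
  -- sets containing j give 0 under g
  have hFj0 : ∑ A ∈ F.filter (fun A => j ∈ A), ∏ t ∈ A, g t = 0 :=
    Finset.sum_eq_zero fun A hA =>
      Finset.prod_eq_zero (Finset.mem_filter.mp hA).2 (by simp [hg])
  -- products over sets containing i under g
  have hFig : ∑ A ∈ F.filter (fun A => i ∈ A), ∏ t ∈ A, g t
      = ∑ A ∈ F.filter (fun A => i ∈ A), ∏ t ∈ A, a t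
        + a j * ∑ A ∈ F.filter (fun A => i ∈ A), ∏ t ∈ A.erase i, a t := by
    rw [Finset.mul_sum, ← Finset.sum_add_distrib]
    refine Finset.sum_congr rfl fun A hA => ?_
    obtain ⟨hAF, hiA⟩ := Finset.mem_filter.mp hA
    have hjA : j ∉ A := fun h => hboth A hAF h hiA
    have herase : ∀ t ∈ A.erase i, g t = a t := by
      intro t ht
      have hti : t ≠ i := (Finset.mem_erase.mp ht).1
      have htj : t ≠ j := fun h => hjA (h ▸ (Finset.mem_erase.mp ht).2)
      simp [hg, hti, htj]
    rw [← Finset.mul_prod_erase A g hiA, ← Finset.mul_prod_erase A a hiA,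
      Finset.prod_congr rfl herase]
    have : g i = a i + a j := by simp [hg, hij]
    rw [this]; ring
  -- key inequality via images
  have hinj : ∀ (k : Fin n), ∀ A ∈ F.filter (fun A => k ∈ A), ∀ A' ∈ F.filter (fun A => k ∈ A),
      A.erase k = A'.erase k → A = A' := by
    intro k A hA A' hA' h
    have h1 := Finset.insert_erase (Finset.mem_filter.mp hA).2
    have h2 := Finset.insert_erase (Finset.mem_filter.mp hA').2
    rw [← h1, ← h2, h]
  have key : ∑ A ∈ F.filter (fun A => j ∈ A), ∏ t ∈ A.erase j, a t
      ≤ ∑ A ∈ F.filter (fun A => i ∈ A), ∏ t ∈ A.erase i, a t := by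
    rw [← Finset.sum_image (f := fun B => ∏ t ∈ B, a t) (hinj j),
      ← Finset.sum_image (f := fun B => ∏ t ∈ B, a t) (hinj i)]
    exact Finset.sum_le_sum_of_subset_of_nonneg hdom
      fun B _ _ => Finset.prod_nonneg fun t _ => ha t
  have hFja : ∑ A ∈ F.filter (fun A => j ∈ A), ∏ t ∈ A, a t
      = a j * ∑ A ∈ F.filter (fun A => j ∈ A), ∏ t ∈ A.erase j, a t := by
    rw [Finset.mul_sum]
    exact Finset.sum_congr rfl fun A hA =>
      (Finset.mul_prod_erase A a (Finset.mem_filter.mp hA).2).symm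
  have haj := ha j
  have hmul := mul_le_mul_of_nonneg_left key haj
  rw [hrest, hFj0, hFig, hFja]
  linarith
end

section
/- Let F be an intersecting 3-uniform hypergraph on [n] that covers pairs, such that for every edge A ∈ F and every i ∈ A there exists B ∈ F with A ∩ B = {i}. Then n ≤ 7. -/
/-- An intersecting 3-graph on `[n]` that covers pairs, such that every edge
meets some edge in each of its single vertices, has at most 7 vertices. -/
theorem gen_family_small (n : ℕ) (F : Finset (Finset (Fin n)))
    (h3 : ∀ e ∈ F, e.card = 3)
    (hint : ∀ A ∈ F, ∀ B ∈ F, (A ∩ B).Nonempty)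
    (hcov : ∀ i j : Fin n, i ≠ j → ∃ e ∈ F, i ∈ e ∧ j ∈ e)
    (huniq : ∀ A ∈ F, ∀ i ∈ A, ∃ B ∈ F, A ∩ B = {i}) :
    n ≤ 7 := by
  by_contra hn
  push_neg at hn
  have hn8 : 8 ≤ n := hn
  -- get a distinguished edge A
  have h01 : (⟨0, by omega⟩ : Fin n) ≠ ⟨1, by omega⟩ := by
    simp [Fin.ext_iff]
  obtain ⟨A, hA, -, -⟩ := hcov _ _ h01
  have hAcard : A.card = 3 := h3 A hA
  set S : Finset (Fin n) := Aᶜ with hSdef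
  have hScard : 5 ≤ S.card := by
    have h1 : S.card = n - 3 := by
      rw [hSdef, Finset.card_compl, hAcard, Fintype.card_fin]
    omega
  have hSA : ∀ x : Fin n, x ∈ S → x ∉ A := fun x hx => Finset.mem_compl.mp hx
  -- structure of edges containing two vertices outside A
  have struct : ∀ e ∈ F, ∀ x y : Fin n, x ∈ e → y ∈ e → x ∈ S → y ∈ S → x ≠ y →
      ∃ t ∈ A, e = {x, y, t} := by
    intro e he x y hxe hye hxS hyS hxy
    obtain ⟨t, ht⟩ := hint e he A hA
    rw [Finset.mem_inter] at ht
    refine ⟨t, ht.2, ?_⟩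
    have hxA : x ∉ A := hSA x hxS
    have hyA : y ∉ A := hSA y hyS
    have hxt : x ≠ t := fun h => hxA (h ▸ ht.2)
    have hyt : y ≠ t := fun h => hyA (h ▸ ht.2)
    have hsub : ({x, y, t} : Finset (Fin n)) ⊆ e := by
      intro z hz
      simp only [Finset.mem_insert, Finset.mem_singleton] at hz
      rcases hz with h | h | h <;> simp [h, hxe, hye, ht.1]
    have hcard : ({x, y, t} : Finset (Fin n)).card = 3 := by
      rw [Finset.card_insert_of_notMem (by simp [hxy, hxt]),
          Finset.card_insert_of_notMem (by simp [hyt]), Finset.card_singleton]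
    exact (Finset.eq_of_subset_of_card_le hsub (by rw [h3 e he, hcard])).symm
  -- two such edges on disjoint outside pairs share their A-vertex
  have dpair : ∀ x1 y1 t1 x2 y2 t2 : Fin n,
      x1 ∈ S → y1 ∈ S → x2 ∈ S → y2 ∈ S → t1 ∈ A → t2 ∈ A →
      x1 ≠ x2 → x1 ≠ y2 → y1 ≠ x2 → y1 ≠ y2 →
      (({x1, y1, t1} : Finset (Fin n)) ∩ {x2, y2, t2}).Nonempty → t1 = t2 := by
    intro x1 y1 t1 x2 y2 t2 hx1 hy1 hx2 hy2 ht1 ht2 h11 h12 h21 h22 hne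
    obtain ⟨z, hz⟩ := hne
    rw [Finset.mem_inter] at hz
    obtain ⟨hz1, hz2⟩ := hz
    have hx1A : x1 ∉ A := hSA _ hx1
    have hy1A : y1 ∉ A := hSA _ hy1
    have hx2A : x2 ∉ A := hSA _ hx2
    have hy2A : y2 ∉ A := hSA _ hy2
    simp only [Finset.mem_insert, Finset.mem_singleton] at hz1 hz2
    rcases hz1 with rfl | rfl | rfl <;> rcases hz2 with rfl | rfl | rfl <;> simp_all
  -- we can always pick a pair of S avoiding three given points
  have pick3 : ∀ p q r : Fin n, ∃ u v : Fin n, u ∈ S ∧ v ∈ S ∧ u ≠ v ∧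
      u ≠ p ∧ u ≠ q ∧ u ≠ r ∧ v ≠ p ∧ v ≠ q ∧ v ≠ r := by
    intro p q r
    have hT : ({p, q, r} : Finset (Fin n)).card ≤ 3 := by
      have h1 := Finset.card_insert_le p ({q, r} : Finset (Fin n))
      have h2 := Finset.card_insert_le q ({r} : Finset (Fin n))
      have h3 : ({r} : Finset (Fin n)).card = 1 := Finset.card_singleton r
      omega
    have hge : 1 < (S \ {p, q, r}).card := by
      have := Finset.le_card_sdiff ({p, q, r} : Finset (Fin n)) S
      omega
    obtain ⟨u, hu, v, hv, huv⟩ := Finset.one_lt_card.mp hge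
    rw [Finset.mem_sdiff] at hu hv
    simp only [Finset.mem_insert, Finset.mem_singleton, not_or] at hu hv
    exact ⟨u, v, hu.1, hv.1, huv, hu.2.1, hu.2.2.1, hu.2.2.2, hv.2.1, hv.2.2.1, hv.2.2.2⟩
  -- a base edge with two vertices outside A
  obtain ⟨x0, y0, hx0S, hy0S, hx0y0, -, -, -, -, -, -⟩ :=
    pick3 (⟨0, by omega⟩ : Fin n) ⟨0, by omega⟩ ⟨0, by omega⟩
  obtain ⟨e0, he0, hx0e0, hy0e0⟩ := hcov x0 y0 hx0y0
  obtain ⟨a, haA, he0eq⟩ := struct e0 he0 x0 y0 hx0e0 hy0e0 hx0S hy0S hx0y0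
  rw [he0eq] at he0
  -- any edge with two outside vertices has A-vertex a
  have main : ∀ x y t u v : Fin n, x ∈ S → y ∈ S → u ∈ S → v ∈ S → t ∈ A →
      u ≠ v → u ≠ x → u ≠ y → u ≠ x0 → u ≠ y0 → v ≠ x → v ≠ y → v ≠ x0 → v ≠ y0 →
      ({x, y, t} : Finset (Fin n)) ∈ F → t = a := by
    intro x y t u v hx hy hu hv ht huv hux huy hux0 huy0 hvx hvy hvx0 hvy0 hmem
    obtain ⟨f, hf, huf, hvf⟩ := hcov u v huv
    obtain ⟨s, hsA, hfeq⟩ := struct f hf u v huf hvf hu hv huv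
    rw [hfeq] at hf
    have h1 : s = t := dpair u v s x y t hu hv hx hy hsA ht hux huy hvx hvy
      (hint _ hf _ hmem)
    have h2 : s = a := dpair u v s x0 y0 a hu hv hx0S hy0S hsA haA hux0 huy0 hvx0 hvy0
      (hint _ hf _ he0)
    exact h1 ▸ h2
  have samecolor : ∀ x y t : Fin n, x ∈ S → y ∈ S → t ∈ A → x ≠ y →
      ({x, y, t} : Finset (Fin n)) ∈ F → t = a := by
    intro x y t hx hy ht hxy hmem
    by_cases hd : x = x0 ∨ x = y0 ∨ y = x0 ∨ y = y0
    · rcases hd with rfl | rfl | rfl | rfl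
      · obtain ⟨u, v, hu, hv, huv, h1, h2, h3, h4, h5, h6⟩ := pick3 x y y0
        exact main x y t u v hx hy hu hv ht huv h1 h2 h1 h3 h4 h5 h4 h6 hmem
      · obtain ⟨u, v, hu, hv, huv, h1, h2, h3, h4, h5, h6⟩ := pick3 x y x0
        exact main x y t u v hx hy hu hv ht huv h1 h2 h3 h1 h4 h5 h6 h4 hmem
      · obtain ⟨u, v, hu, hv, huv, h1, h2, h3, h4, h5, h6⟩ := pick3 x y y0
        exact main x y t u v hx hy hu hv ht huv h1 h2 h2 h3 h4 h5 h5 h6 hmem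
      · obtain ⟨u, v, hu, hv, huv, h1, h2, h3, h4, h5, h6⟩ := pick3 x y x0
        exact main x y t u v hx hy hu hv ht huv h1 h2 h3 h2 h4 h5 h6 h5 hmem
    · push_neg at hd
      exact dpair x y t x0 y0 a hx hy hx0S hy0S ht haA hd.1 hd.2.1 hd.2.2.1 hd.2.2.2
        (hint _ hmem _ he0)
  -- every edge contains a
  have alla : ∀ e ∈ F, a ∈ e := by
    intro e he
    by_contra hae
    have hge : 1 < (S \ e).card := by
      have h1 := Finset.le_card_sdiff e S
      have h2 := h3 e he
      omega
    obtain ⟨u, hu, v, hv, huv⟩ := Finset.one_lt_card.mp hge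
    rw [Finset.mem_sdiff] at hu hv
    obtain ⟨f, hf, huf, hvf⟩ := hcov u v huv
    obtain ⟨s, hsA, hfeq⟩ := struct f hf u v huf hvf hu.1 hv.1 huv
    rw [hfeq] at hf
    have hs : s = a := samecolor u v s hu.1 hv.1 hsA huv hf
    obtain ⟨z, hz⟩ := hint e he _ hf
    rw [Finset.mem_inter] at hz
    obtain ⟨hze, hzf⟩ := hz
    simp only [Finset.mem_insert, Finset.mem_singleton] at hzf
    rcases hzf with rfl | rfl | rfl
    · exact hu.2 hze
    · exact hv.2 hze
    · exact hae (hs ▸ hze)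
  -- final contradiction using huniq
  obtain ⟨i, hiA, hia⟩ := Finset.exists_mem_ne (by omega : 1 < A.card) a
  obtain ⟨B, hB, hAB⟩ := huniq A hA i hiA
  have haAB : a ∈ A ∩ B := Finset.mem_inter.mpr ⟨haA, alla B hB⟩
  rw [hAB, Finset.mem_singleton] at haAB
  exact hia haAB.symm
end

section
/- Let T_6 be the 3-graph on 6 vertices partitioned into 3 parts of size 2 with a cyclic order on the parts, whose edges are all triples with one vertex in each part together with all triples with 2 vertices in one part and 1 vertex in the next part in the cyclic order. Then λ(T_6) ≤ 7/108; in particular λ(T_6) ≤ 2/25 − 10^{-3}. -/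
/-- The partition of the six vertices of `T₆` into three parts of size two:
parts `{0,1}`, `{2,3}`, `{4,5}` in cyclic order. -/
def t6part (v : Fin 6) : Fin 3 := ⟨v.val / 2, by omega⟩

/-- The 3-graph `T₆`: all triples with one vertex in each part together with
all triples having two vertices in some part and one in the next part in the
cyclic order. -/
def T6 : Finset (Finset (Fin 6)) :=
  (Finset.univ.powersetCard 3).filter
    (fun e =>
      (e.image t6part).card = 3 ∨
        ∃ p : Fin 3, (e.filter (fun v => t6part v = p)).card = 2 ∧
          (e.filter (fun v => t6part v = p + 1)).card = 1)

set_option maxHeartbeats 1000000 in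
/-- The key three-variable inequality. -/
lemma t6_cubic_ineq (a b c : ℝ) (ha : 0 ≤ a) (hb : 0 ≤ b) (hc : 0 ≤ c)
    (h : a + b + c = 1) :
    a*b*c + (a^2*b + b^2*c + c^2*a)/4 ≤ 7/108 := by
  nlinarith [sq_nonneg (a-b), sq_nonneg (b-c), sq_nonneg (c-a), sq_nonneg (a+b-2*c),
    sq_nonneg (b+c-2*a), sq_nonneg (c+a-2*b), mul_nonneg ha hb, mul_nonneg hb hc,
    mul_nonneg hc ha, mul_nonneg (mul_nonneg ha hb) hc,
    mul_nonneg ha (sq_nonneg (b-c)), mul_nonneg hb (sq_nonneg (c-a)),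
    mul_nonneg hc (sq_nonneg (a-b)), mul_nonneg ha (sq_nonneg (a-b)),
    mul_nonneg hb (sq_nonneg (b-c)), mul_nonneg hc (sq_nonneg (c-a)),
    mul_nonneg ha (sq_nonneg (c-a)), mul_nonneg hb (sq_nonneg (a-b)),
    mul_nonneg hc (sq_nonneg (b-c))]

/-- Expansion of the Lagrangian sum of `T₆`. -/
lemma T6_sum_eq (x : Fin 6 → ℝ) :
    ∑ e ∈ T6, ∏ i ∈ e, x i =
      (x 0 + x 1) * (x 2 + x 3) * (x 4 + x 5) + x 0 * x 1 * (x 2 + x 3)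
        + x 2 * x 3 * (x 4 + x 5) + x 4 * x 5 * (x 0 + x 1) := by
  rw [show T6 = {({2,3,5} : Finset (Fin 6)), {2,3,4}, {1,4,5}, {1,3,5}, {1,3,4}, {1,2,5},
    {1,2,4}, {0,4,5}, {0,3,5}, {0,3,4}, {0,2,5}, {0,2,4}, {0,1,3}, {0,1,2}} from by decide]
  simp (config := { decide := true }) [Finset.sum_insert, Finset.prod_insert,
    Finset.mem_insert, Finset.mem_singleton]
  ring

lemma lagrangian_T6_main (x : Fin 6 → ℝ) (hx : ∀ i, 0 ≤ x i) (hs : (∑ i, x i) = 1) :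
    ∑ e ∈ T6, ∏ i ∈ e, x i ≤ 7 / 108 := by
  rw [T6_sum_eq]
  rw [Fin.sum_univ_six] at hs
  have h0 := hx 0; have h1 := hx 1; have h2 := hx 2
  have h3 := hx 3; have h4 := hx 4; have h5 := hx 5
  set a := x 0 + x 1 with ha'
  set b := x 2 + x 3 with hb'
  set c := x 4 + x 5 with hc'
  have ha : 0 ≤ a := by positivity
  have hb : 0 ≤ b := by positivity
  have hc : 0 ≤ c := by positivity
  have key := t6_cubic_ineq a b c ha hb hc (by linarith)
  have e1 : x 0 * x 1 * b ≤ a^2/4 * b := by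
    have := mul_le_mul_of_nonneg_right (by nlinarith [sq_nonneg (x 0 - x 1)] :
      x 0 * x 1 ≤ a^2/4) hb
    linarith
  have e2 : x 2 * x 3 * c ≤ b^2/4 * c := by
    have := mul_le_mul_of_nonneg_right (by nlinarith [sq_nonneg (x 2 - x 3)] :
      x 2 * x 3 ≤ b^2/4) hc
    linarith
  have e3 : x 4 * x 5 * a ≤ c^2/4 * a := by
    have := mul_le_mul_of_nonneg_right (by nlinarith [sq_nonneg (x 4 - x 5)] :
      x 4 * x 5 ≤ c^2/4) ha
    linarith
  nlinarith [key, e1, e2, e3]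

/-- `λ(T₆) ≤ 7/108`; in particular `λ(T₆) ≤ 2/25 − 10⁻³`. -/
theorem lagrangian_T6 :
    (∀ x : Fin 6 → ℝ, (∀ i, 0 ≤ x i) → (∑ i, x i) = 1 →
      ∑ e ∈ T6, ∏ i ∈ e, x i ≤ 7 / 108) ∧
    (∀ x : Fin 6 → ℝ, (∀ i, 0 ≤ x i) → (∑ i, x i) = 1 →
      ∑ e ∈ T6, ∏ i ∈ e, x i ≤ 2 / 25 - 1 / 1000) := by
  refine ⟨lagrangian_T6_main, fun x hx hs => ?_⟩
  have := lagrangian_T6_main x hx hs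
  linarith
end

section
/- The maximum over 0 ≤ x ≤ 1/3 of the function f(x) = (3/4)(x − 2x² − 3x³) is attained at x = (√13 − 2)/9 and equals (13√13 − 35)/162, and this value is strictly less than 2/25 − 1/1000. -/
/-- The maximum of `f(x) = (3/4)(x − 2x² − 3x³)` over `0 ≤ x ≤ 1/3` is
attained at `x = (√13 − 2)/9` and equals `(13√13 − 35)/162`, which is strictly
less than `2/25 − 1/1000`. -/
theorem max_K53_minus_polynomial :
    (3 / 4 : ℝ) * ((Real.sqrt 13 - 2) / 9 - 2 * ((Real.sqrt 13 - 2) / 9) ^ 2 -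
        3 * ((Real.sqrt 13 - 2) / 9) ^ 3) = (13 * Real.sqrt 13 - 35) / 162 ∧
    (0 ≤ (Real.sqrt 13 - 2) / 9 ∧ (Real.sqrt 13 - 2) / 9 ≤ 1 / 3) ∧
    (∀ x : ℝ, 0 ≤ x → x ≤ 1 / 3 →
      (3 / 4) * (x - 2 * x ^ 2 - 3 * x ^ 3) ≤ (13 * Real.sqrt 13 - 35) / 162) ∧
    (13 * Real.sqrt 13 - 35) / 162 < 2 / 25 - 1 / 1000 := by
  have hs : Real.sqrt 13 ^ 2 = 13 := Real.sq_sqrt (by norm_num)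
  have h3 : (3 : ℝ) < Real.sqrt 13 := by
    nlinarith [Real.sqrt_nonneg 13]
  have h4 : Real.sqrt 13 < 3.7 := by
    nlinarith [Real.sqrt_nonneg 13]
  refine ⟨by nlinarith, ⟨by nlinarith, by nlinarith⟩, ?_, by nlinarith⟩
  intro x hx0 hx1
  set s := Real.sqrt 13
  have key : (s - 2) / 9 - x ≥ -(1/3) := by nlinarith
  nlinarith [sq_nonneg (x - (s - 2) / 9), mul_nonneg (sq_nonneg (x - (s-2)/9)) hx0,
    sq_nonneg (x - (s-2)/9), mul_nonneg (mul_nonneg hx0 hx0) hx0]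
end

section
/- The balanced blow-up T_5^3(n) of K_5^3 is K_{3,3}^3-free. Here K_{3,3}^3 is the 3-graph with vertices x_1,x_2,x_3, y_1,y_2,y_3 and z_{ij} for 1 ≤ i,j ≤ 3, and edges {x_1,x_2,x_3}, {y_1,y_2,y_3}, and {x_i,y_j,z_{ij}} for all 1 ≤ i,j ≤ 3. Indeed, any 3-graph whose vertex set is partitioned into 5 parts with edges only among triples meeting 3 distinct parts contains no copy of K_{3,3}^3. -/
/-- Any 3-graph whose vertex set is partitioned into five parts, with edges
only among triples meeting three distinct parts (such as the balanced blow-up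
`T₅³(n)` of `K₅³`), contains no copy of `K₃,₃³`. -/
theorem blowup_K33_free {V : Type*} [Fintype V] [DecidableEq V]
    (part : V → Fin 5) (G : Finset (Finset V))
    (hG : ∀ e ∈ G, e.card = 3 ∧ (e.image part).card = 3) :
    ¬ ∃ f : (Fin 3 ⊕ Fin 3 ⊕ Fin 3 × Fin 3) → V,
      Function.Injective f ∧
      ({f (Sum.inl 0), f (Sum.inl 1), f (Sum.inl 2)} : Finset V) ∈ G ∧
      ({f (Sum.inr (Sum.inl 0)), f (Sum.inr (Sum.inl 1)),
        f (Sum.inr (Sum.inl 2))} : Finset V) ∈ G ∧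
      ∀ i j : Fin 3,
        ({f (Sum.inl i), f (Sum.inr (Sum.inl j)),
          f (Sum.inr (Sum.inr (i, j)))} : Finset V) ∈ G := by
  rintro ⟨f, hinj, hx, hy, hz⟩
  obtain ⟨-, hxi⟩ := hG _ hx
  obtain ⟨-, hyi⟩ := hG _ hy
  set A := (({f (Sum.inl 0), f (Sum.inl 1), f (Sum.inl 2)} : Finset V)).image part with hA
  set B := (({f (Sum.inr (Sum.inl 0)), f (Sum.inr (Sum.inl 1)),
      f (Sum.inr (Sum.inl 2))} : Finset V)).image part with hB
  have hAB : (A ∩ B).Nonempty := by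
    rw [← Finset.card_pos]
    have h1 := Finset.card_union_add_card_inter A B
    have h5 : (A ∪ B).card ≤ 5 := le_trans (Finset.card_le_univ _) (by simp)
    omega
  obtain ⟨p, hp⟩ := hAB
  rw [Finset.mem_inter] at hp
  obtain ⟨hpA, hpB⟩ := hp
  rw [hA] at hpA
  rw [hB] at hpB
  simp only [Finset.mem_image, Finset.mem_insert, Finset.mem_singleton] at hpA hpB
  obtain ⟨a, ha, hap⟩ := hpA
  obtain ⟨b, hb, hbp⟩ := hpB
  have hi : ∃ i : Fin 3, part (f (Sum.inl i)) = p := by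
    rcases ha with h | h | h <;> subst h
    exacts [⟨0, hap⟩, ⟨1, hap⟩, ⟨2, hap⟩]
  have hj : ∃ j : Fin 3, part (f (Sum.inr (Sum.inl j))) = p := by
    rcases hb with h | h | h <;> subst h
    exacts [⟨0, hbp⟩, ⟨1, hbp⟩, ⟨2, hbp⟩]
  obtain ⟨i, hi⟩ := hi
  obtain ⟨j, hj⟩ := hj
  have hcard := (hG _ (hz i j)).2
  rw [Finset.image_insert, Finset.image_insert, Finset.image_singleton, hi, hj] at hcard
  have h2 : ({p, p, part (f (Sum.inr (Sum.inr (i, j))))} : Finset (Fin 5)).card ≤ 2 := by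
    rw [Finset.insert_idem]
    exact le_trans (Finset.card_insert_le _ _) (by simp)
  omega
end

section
/- Suppose G is a 3-uniform hypergraph on vertex set V that covers pairs (every pair of vertices lies in a common edge) and is not intersecting, i.e. contains two disjoint edges. Then there is a homomorphism from K_{3,3}^3 to G, i.e. an edge-preserving (not necessarily injective) map from the vertices of K_{3,3}^3 to V. -/
/-- A 3-graph that covers pairs and contains two disjoint edges admits a
homomorphism from `K₃,₃³`. -/
theorem hom_K33_of_covers_pairs_not_intersecting {V : Type*} [Fintype V]
    [DecidableEq V] (G : Finset (Finset V))
    (h3 : ∀ e ∈ G, e.card = 3)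
    (hcov : ∀ i j : V, i ≠ j → ∃ e ∈ G, i ∈ e ∧ j ∈ e)
    (hdisj : ∃ e₁ ∈ G, ∃ e₂ ∈ G, e₁ ∩ e₂ = ∅) :
    ∃ f : (Fin 3 ⊕ Fin 3 ⊕ Fin 3 × Fin 3) → V,
      ({f (Sum.inl 0), f (Sum.inl 1), f (Sum.inl 2)} : Finset V) ∈ G ∧
      ({f (Sum.inr (Sum.inl 0)), f (Sum.inr (Sum.inl 1)),
        f (Sum.inr (Sum.inl 2))} : Finset V) ∈ G ∧
      ∀ i j : Fin 3,
        ({f (Sum.inl i), f (Sum.inr (Sum.inl j)),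
          f (Sum.inr (Sum.inr (i, j)))} : Finset V) ∈ G := by
  obtain ⟨e₁, he₁, e₂, he₂, hd⟩ := hdisj
  obtain ⟨a, b, c, hab, hac, hbc, he1⟩ := Finset.card_eq_three.mp (h3 e₁ he₁)
  obtain ⟨d, u, w, hdu, hdw, huw, he2⟩ := Finset.card_eq_three.mp (h3 e₂ he₂)
  set X : Fin 3 → V := ![a, b, c] with hX
  set Y : Fin 3 → V := ![d, u, w] with hY
  have hXe : ∀ i, X i ∈ e₁ := by
    intro i; fin_cases i <;> simp [hX, he1]
  have hYe : ∀ j, Y j ∈ e₂ := by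
    intro j; fin_cases j <;> simp [hY, he2]
  have hne : ∀ i j, X i ≠ Y j := by
    intro i j h
    have : X i ∈ e₁ ∩ e₂ := Finset.mem_inter.mpr ⟨hXe i, h ▸ hYe j⟩
    simp [hd] at this
  have hz : ∀ i j : Fin 3, ∃ z, ({X i, Y j, z} : Finset V) ∈ G := by
    intro i j
    obtain ⟨e, heG, hxe, hye⟩ := hcov (X i) (Y j) (hne i j)
    have hsub : ({X i, Y j} : Finset V) ⊆ e := by
      intro t ht; simp at ht; rcases ht with h | h <;> simp [h, hxe, hye]
    have hcard2 : ({X i, Y j} : Finset V).card = 2 := by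
      rw [Finset.card_insert_of_notMem (by simp [hne i j])]; simp
    have hex : ∃ z ∈ e, z ∉ ({X i, Y j} : Finset V) := by
      by_contra h
      push_neg at h
      have := Finset.card_le_card h
      rw [hcard2, h3 e heG] at this
      omega
    obtain ⟨z, hze, hzn⟩ := hex
    refine ⟨z, ?_⟩
    have hzx : z ≠ X i := by intro h; exact hzn (by simp [h])
    have hzy : z ≠ Y j := by intro h; exact hzn (by simp [h])
    have hsub2 : ({X i, Y j, z} : Finset V) ⊆ e := by
      intro t ht; simp at ht; rcases ht with h | h | h <;> simp [h, hxe, hye, hze]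
    have hcard3 : ({X i, Y j, z} : Finset V).card = 3 := by
      rw [Finset.card_insert_of_notMem (by simp [hne i j, hzx.symm]),
        Finset.card_insert_of_notMem (by simp [hzy.symm])]
      simp
    have : ({X i, Y j, z} : Finset V) = e :=
      Finset.eq_of_subset_of_card_le hsub2 (by rw [hcard3, h3 e heG])
    rwa [this]
  choose Z hZ using hz
  refine ⟨Sum.elim X (Sum.elim Y (fun p => Z p.1 p.2)), ?_, ?_, ?_⟩
  · have : ({X 0, X 1, X 2} : Finset V) = e₁ := by simp [hX, he1]
    simpa [this] using he₁
  · have : ({Y 0, Y 1, Y 2} : Finset V) = e₂ := by simp [hY, he2]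
    simpa [this] using he₂
  · intro i j; simpa using hZ i j
end
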